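/- arXiv:1510.02875 — 4 statements merged into one kernel-verified Lean document; each statement's English description precedes it below -/
import Mathlib

section
/- For every even positive integer n, there is no legal game sequence of length n² on the n×n chessboard; that is, the squares of the n×n board cannot all be filled by legal play. -/
/-- Two distinct squares `(a,b)` and `(c,d)` attack each other if `a = c`, `b = d`,
`a + b = c + d`, or `a - b = c - d` (the last encoded as `a + d = c + b`). -/
def attacks (p q : ℕ × ℕ) : Prop :=
  p ≠ q ∧ (p.1 = q.1 ∨ p.2 = q.2 ∨ p.1 + p.2 = q.1 + q.2 ∨ p.1 + q.2 = q.1 + p.2)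

instance : ∀ p q : ℕ × ℕ, Decidable (attacks p q) := fun p q => by
  unfold attacks; infer_instance

/-- The squares of the `n × n` chessboard: pairs `(i,j)` with `1 ≤ i, j ≤ n`. -/
def board (n : ℕ) : Finset (ℕ × ℕ) := Finset.Icc 1 n ×ˢ Finset.Icc 1 n

/-- A legal game sequence: pairwise distinct squares of the board such that each newly
placed queen lands on a square attacked by an even number of previously placed queens. -/
def IsLegalSeq (n : ℕ) {k : ℕ} (q : Fin k → ℕ × ℕ) : Prop :=
  Function.Injective q ∧ (∀ i, q i ∈ board n) ∧
    ∀ i : Fin k, Even ((Finset.univ.filter fun j : Fin k => j < i ∧ attacks (q j) (q i)).card)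

/-- A set `S` of squares is locked if every square of the board not in `S` is attacked by
an odd number of squares of `S`. -/
def Locked (n : ℕ) (S : Finset (ℕ × ℕ)) : Prop :=
  ∀ p ∈ board n, p ∉ S → Odd ((S.filter fun s => attacks s p).card)

/-!
The last queen of a complete game is attacked by every other square of the board, and by the
legality rule an even number of them. But a square `(a, b)` has `n - 1` other squares in its row
and column each, `n - 1 - |a - b|` on its diagonal and `n - 1 - |a + b - n - 1|` on its
antidiagonal, and for even `n` this total is odd.
-/

open Finset

section Counting

variable {n a b : ℕ}

lemma card_board : (board n).card = n ^ 2 := by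
  simp [board, sq]

lemma card_filter_row (hp : (a, b) ∈ board n) :
    ((board n).filter fun s => s.1 = a ∧ s.2 ≠ b).card = n - 1 := by
  simp only [board, mem_product, mem_Icc] at hp
  have : ((board n).filter fun s => s.1 = a ∧ s.2 ≠ b) = ((Icc 1 n).erase b).image (a, ·) := by
    ext ⟨c, d⟩
    simp only [mem_filter, board, mem_product, mem_Icc, mem_image, mem_erase, Prod.mk.injEq]
    constructor
    · rintro ⟨⟨-, hd⟩, rfl, hne⟩; exact ⟨d, ⟨hne, hd⟩, rfl, rfl⟩
    · rintro ⟨x, ⟨hx, hx2⟩, rfl, rfl⟩; omega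
  rw [this, card_image_of_injective _ (Prod.mk_right_injective a),
    card_erase_of_mem (by simp; omega), Nat.card_Icc]
  omega

lemma card_filter_col (hp : (a, b) ∈ board n) :
    ((board n).filter fun s => s.2 = b ∧ s.1 ≠ a).card = n - 1 := by
  simp only [board, mem_product, mem_Icc] at hp
  have : ((board n).filter fun s => s.2 = b ∧ s.1 ≠ a) = ((Icc 1 n).erase a).image (·, b) := by
    ext ⟨c, d⟩
    simp only [mem_filter, board, mem_product, mem_Icc, mem_image, mem_erase, Prod.mk.injEq]
    constructor
    · rintro ⟨⟨hc, -⟩, rfl, hne⟩; exact ⟨c, ⟨hne, hc⟩, rfl, rfl⟩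
    · rintro ⟨x, ⟨hx, hx2⟩, rfl, rfl⟩; omega
  rw [this, card_image_of_injective _ (Prod.mk_left_injective b),
    card_erase_of_mem (by simp; omega), Nat.card_Icc]
  omega

lemma card_filter_diag_add (hp : (a, b) ∈ board n) :
    ((board n).filter fun s => s.1 + b = a + s.2 ∧ s.1 ≠ a).card
      + ((a : ℤ) - b).natAbs + 1 = n := by
  simp only [board, mem_product, mem_Icc] at hp
  have : ((board n).filter fun s => s.1 + b = a + s.2 ∧ s.1 ≠ a)
      = ((Icc (max 1 (a + 1 - b)) (min n (a + n - b))).erase a).image fun c => (c, c + b - a) := by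
    ext ⟨c, d⟩
    simp only [mem_filter, board, mem_product, mem_Icc, mem_image, mem_erase,
      Prod.mk.injEq, le_min_iff, max_le_iff]
    constructor
    · rintro ⟨⟨hc, hd⟩, heq, hne⟩; exact ⟨c, ⟨hne, by omega, by omega⟩, rfl, by omega⟩
    · rintro ⟨x, ⟨hx, hx1, hx2⟩, rfl, rfl⟩; omega
  rw [this, card_image_of_injective _ fun x y h => congrArg Prod.fst h,
    card_erase_of_mem (by simp; omega), Nat.card_Icc]
  omega

lemma card_filter_antidiag_add (hp : (a, b) ∈ board n) :
    ((board n).filter fun s => s.1 + s.2 = a + b ∧ s.1 ≠ a).card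
      + ((a : ℤ) + b - (n + 1)).natAbs + 1 = n := by
  simp only [board, mem_product, mem_Icc] at hp
  have : ((board n).filter fun s => s.1 + s.2 = a + b ∧ s.1 ≠ a)
      = ((Icc (max 1 (a + b - n)) (min n (a + b - 1))).erase a).image fun c => (c, a + b - c) := by
    ext ⟨c, d⟩
    simp only [mem_filter, board, mem_product, mem_Icc, mem_image, mem_erase,
      Prod.mk.injEq, le_min_iff, max_le_iff]
    constructor
    · rintro ⟨⟨hc, hd⟩, heq, hne⟩; exact ⟨c, ⟨hne, by omega, by omega⟩, rfl, by omega⟩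
    · rintro ⟨x, ⟨hx, hx1, hx2⟩, rfl, rfl⟩; omega
  rw [this, card_image_of_injective _ fun x y h => congrArg Prod.fst h,
    card_erase_of_mem (by simp; omega), Nat.card_Icc]
  omega

/-- The attackers are split disjointly into the row, and the column, diagonal and antidiagonal
off that row. -/
lemma card_filter_attacks_add (hp : (a, b) ∈ board n) :
    ((board n).filter (attacks · (a, b))).card
      + ((a : ℤ) - b).natAbs + ((a : ℤ) + b - (n + 1)).natAbs + 4 = 4 * n := by
  have hdiag := card_filter_diag_add hp
  have hantidiag := card_filter_antidiag_add hp
  set row := (board n).filter fun s => s.1 = a ∧ s.2 ≠ b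
  set col := (board n).filter fun s => s.2 = b ∧ s.1 ≠ a
  set diag := (board n).filter fun s => s.1 + b = a + s.2 ∧ s.1 ≠ a
  set antidiag := (board n).filter fun s => s.1 + s.2 = a + b ∧ s.1 ≠ a
  have hsplit : (board n).filter (attacks · (a, b)) = (row ∪ col) ∪ (diag ∪ antidiag) := by
    ext ⟨c, d⟩
    simp only [row, col, diag, antidiag, mem_union, mem_filter]
    simp only [attacks, ne_eq, Prod.mk.injEq]
    tauto
  rw [hsplit, card_union_of_disjoint, card_union_of_disjoint, card_union_of_disjoint,
    card_filter_row hp, card_filter_col hp]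
  · simp only [board, mem_product, mem_Icc] at hp
    omega
  all_goals
    refine disjoint_left.2 fun ⟨c, d⟩ h₁ h₂ => ?_
    simp only [row, col, diag, antidiag, mem_union, mem_filter] at h₁ h₂
    omega

/-- `4n - 4 - |a - b| - |a + b - n - 1|` has the parity of `(a - b) + (a + b - n - 1) = 2a - n - 1`. -/
lemma odd_card_filter_attacks (heven : Even n) {p : ℕ × ℕ} (hp : p ∈ board n) :
    Odd ((board n).filter (attacks · p)).card := by
  obtain ⟨a, b⟩ := p
  have hcount := card_filter_attacks_add hp
  obtain ⟨m, rfl⟩ := heven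
  rw [Nat.odd_iff]
  omega

end Counting

namespace IsLegalSeq

variable {n m : ℕ} {q : Fin m → ℕ × ℕ}

lemma image_eq_board (hq : IsLegalSeq n q) (hm : m = n ^ 2) : univ.image q = board n :=
  eq_of_subset_of_card_le (image_subset_iff.2 fun i _ => hq.2.1 i) <| by
    rw [card_image_of_injective _ hq.1, card_univ, Fintype.card_fin, card_board, hm]

lemma even_card_filter_attacks_of_forall_le (hq : IsLegalSeq n q) {i : Fin m}
    (hi : ∀ j, j ≤ i) : Even ((univ.image q).filter (attacks · (q i))).card := by
  have hbefore : (univ.filter fun j => j < i ∧ attacks (q j) (q i))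
      = univ.filter fun j => attacks (q j) (q i) :=
    filter_congr fun j _ => and_iff_right_of_imp fun h =>
      (hi j).lt_of_ne fun hji => h.1 (congrArg q hji)
  rw [filter_image, card_image_of_injective _ hq.1]
  exact hbefore ▸ hq.2.2 i

end IsLegalSeq

/-- For every even positive integer `n`, there is no legal game sequence of length
`n ^ 2` on the `n × n` chessboard. -/
theorem even_board_has_no_complete_solution (n : ℕ) (hpos : 0 < n) (heven : Even n) :
    ¬ ∃ q : Fin (n ^ 2) → ℕ × ℕ, IsLegalSeq n q := by
  rintro ⟨q, hq⟩
  let last : Fin (n ^ 2) := ⟨n ^ 2 - 1, Nat.sub_lt (by positivity) one_pos⟩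
  have hlast : ∀ j, j ≤ last := fun j => Fin.le_def.2 (Nat.le_sub_one_of_lt j.2)
  have heven_attackers := hq.even_card_filter_attacks_of_forall_le hlast
  rw [hq.image_eq_board rfl] at heven_attackers
  exact Nat.not_even_iff_odd.2 (odd_card_filter_attacks heven (hq.2.1 last)) heven_attackers
end

section
/- For every odd positive integer n, there exists a legal game sequence on the n×n chessboard whose set of placed squares is exactly S = {(1,i) : 1 ≤ i ≤ n} ∪ {(i,1) : 1 ≤ i ≤ n} (the first row and first column), and this set S is locked. -/
/-- The first row and first column of the `n × n` chessboard. -/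
def firstRowCol (n : ℕ) : Finset (ℕ × ℕ) :=
  ((Finset.Icc 1 n).image fun i => (1, i)) ∪ ((Finset.Icc 1 n).image fun i => (i, 1))

/-!
Call `(1, j)` and `(i, 1)` with `i, j ≥ 2` row and column squares. Two row squares (or two
column squares) always attack each other, while `(1, j)` attacks `(i, 1)` exactly when `i = j`
(anti-diagonal). Once the row and column squares with indices `2, …, m` are placed, `m` odd,
the moves `(1, m + 1)`, `(m + 2, 1)`, `(m + 1, 1)`, `(1, m + 2)` meet `m - 1`, `m - 1`, `m + 1`,
`m + 1` earlier attackers, all even; the corner `(1, 1)`, played last, meets all `2 (n - 1)`.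

A square `p` off the first row and column lies on four lines, pairwise meeting only at `p`. Its
row, its column and its diagonal each meet the first row and column in exactly one square,
its anti-diagonal in two mirror squares or none, so `p` has an odd number of attackers.
-/

open Finset

lemma attacks_mk_iff {a b c d : ℕ} :
    attacks (a, b) (c, d) ↔
      (a ≠ c ∨ b ≠ d) ∧ (a = c ∨ b = d ∨ a + b = c + d ∨ a + d = c + b) := by
  simp [attacks, Prod.ext_iff, ← not_and_or]

lemma card_filter_attacks {S : Finset (ℕ × ℕ)} {p : ℕ × ℕ} (hp : p ∉ S) :
    #(S.filter (attacks · p)) = #(S.filter (·.1 = p.1)) + #(S.filter (·.2 = p.2)) +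
      #(S.filter fun s => s.1 + s.2 = p.1 + p.2) +
      #(S.filter fun s => s.1 + p.2 = p.1 + s.2) := by
  simp only [card_filter, ← sum_add_distrib]
  refine sum_congr rfl fun s hs => ?_
  have hne : s ≠ p := ne_of_mem_of_not_mem hs hp
  simp only [attacks, ne_eq, Prod.ext_iff] at hne ⊢
  split_ifs <;> omega

theorem IsLegalSeq.snoc {n k : ℕ} {q : Fin k → ℕ × ℕ} {x : ℕ × ℕ} (hq : IsLegalSeq n q)
    (hx : x ∈ board n) (hxq : x ∉ Set.range q)
    (heven : Even #(univ.filter fun j => attacks (q j) x)) :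
    IsLegalSeq n (Fin.snoc q x : Fin (k + 1) → ℕ × ℕ) := by
  obtain ⟨hinj, hboard, hcount⟩ := hq
  refine ⟨Fin.snoc_injective_of_injective hinj hxq, Fin.lastCases (by simpa) (by simpa), ?_⟩
  refine Fin.lastCases ?_ fun i => ?_
  · simpa only [card_filter, Fin.sum_univ_castSucc, Fin.snoc_castSucc, Fin.snoc_last,
      lt_self_iff_false, false_and, if_false, add_zero, Fin.castSucc_lt_last, true_and] using heven
  · simpa only [card_filter, Fin.sum_univ_castSucc, Fin.snoc_castSucc, Fin.snoc_last,
      Fin.castSucc_lt_castSucc_iff, not_lt_of_gt (Fin.castSucc_lt_last i), false_and, if_false,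
      add_zero] using hcount i

def IsReachable (n : ℕ) (S : Finset (ℕ × ℕ)) : Prop :=
  ∃ (k : ℕ) (q : Fin k → ℕ × ℕ), IsLegalSeq n q ∧ univ.image q = S

lemma isReachable_empty (n : ℕ) : IsReachable n ∅ :=
  ⟨0, Fin.elim0, ⟨fun i => i.elim0, fun i => i.elim0, fun i => i.elim0⟩, by simp⟩

lemma IsReachable.insert_of_even {n : ℕ} {S : Finset (ℕ × ℕ)} {x : ℕ × ℕ}
    (h : IsReachable n S) (hx : x ∈ board n) (hxS : x ∉ S)
    (heven : Even #(S.filter (attacks · x))) :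
    IsReachable n (insert x S) := by
  obtain ⟨k, q, hq, rfl⟩ := h
  refine ⟨k + 1, Fin.snoc q x, hq.snoc hx (by simpa using hxS) ?_, ?_⟩
  · rwa [filter_image, card_image_of_injective _ hq.1] at heven
  · rw [← coe_inj]
    simp

lemma mem_firstRowCol {n : ℕ} {p : ℕ × ℕ} :
    p ∈ firstRowCol n ↔ p.1 = 1 ∧ 1 ≤ p.2 ∧ p.2 ≤ n ∨ p.2 = 1 ∧ 1 ≤ p.1 ∧ p.1 ≤ n := by
  obtain ⟨a, b⟩ := p
  simp [firstRowCol, and_comm, eq_comm]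

theorem locked_firstRowCol (n : ℕ) : Locked n (firstRowCol n) := by
  rintro ⟨a, b⟩ hp hpS
  obtain ⟨ha, hb, han, hbn⟩ : 2 ≤ a ∧ 2 ≤ b ∧ a ≤ n ∧ b ≤ n := by
    simp [board, mem_firstRowCol] at hp hpS; omega
  have hrow : #((firstRowCol n).filter (·.1 = a)) = 1 :=
    card_eq_one.2 ⟨(a, 1), by ext ⟨u, v⟩; simp [mem_firstRowCol]; omega⟩
  have hcol : #((firstRowCol n).filter (·.2 = b)) = 1 :=
    card_eq_one.2 ⟨(1, b), by ext ⟨u, v⟩; simp [mem_firstRowCol]; omega⟩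
  have hdiag : #((firstRowCol n).filter fun s => s.1 + b = a + s.2) = 1 := by
    rcases le_total b a with hab | hab
    · exact card_eq_one.2 ⟨(1 + a - b, 1), by ext ⟨u, v⟩; simp [mem_firstRowCol]; omega⟩
    · exact card_eq_one.2 ⟨(1, 1 + b - a), by ext ⟨u, v⟩; simp [mem_firstRowCol]; omega⟩
  have hanti : Even #((firstRowCol n).filter fun s => s.1 + s.2 = a + b) := by
    by_cases hab : a + b ≤ n + 1
    · rw [card_eq_two.2 ⟨(1, a + b - 1), (a + b - 1, 1), by simp; omega, ?_⟩]
      · exact even_two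
      · ext ⟨u, v⟩; simp [mem_firstRowCol]; omega
    · rw [filter_false_of_mem fun ⟨u, v⟩ hs h => by simp [mem_firstRowCol] at hs h; omega]
      exact Even.zero
  rw [card_filter_attacks hpS, hrow, hcol, hdiag, Nat.odd_iff]
  rw [Nat.even_iff] at hanti
  dsimp only
  omega

def rowColSet (R C : Finset ℕ) : Finset (ℕ × ℕ) := R.image (1, ·) ∪ C.image (·, 1)

lemma disjoint_image_row_image_col {R C : Finset ℕ} (h : 1 ∉ R ∨ 1 ∉ C) :
    Disjoint (R.image (1, ·)) (C.image (·, 1)) := by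
  simp only [disjoint_left, mem_image]
  rintro _ ⟨r, hr, rfl⟩ ⟨i, hi, hir⟩
  obtain ⟨rfl, rfl⟩ := Prod.mk.inj hir
  tauto

lemma card_rowColSet {R C : Finset ℕ} (h : 1 ∉ R ∨ 1 ∉ C) : #(rowColSet R C) = #R + #C := by
  rw [rowColSet, card_union_of_disjoint (disjoint_image_row_image_col h),
    card_image_of_injective _ (Prod.mk_right_injective 1),
    card_image_of_injective _ (Prod.mk_left_injective 1)]

lemma card_filter_attacks_row {R C : Finset ℕ} {j : ℕ} (hC : ∀ i ∈ C, 2 ≤ i) (hj : 2 ≤ j)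
    (hjR : j ∉ R) :
    #((rowColSet R C).filter (attacks · (1, j))) = #R + if j ∈ C then 1 else 0 := by
  have hrow : R.filter (fun i => attacks (1, i) (1, j)) = R :=
    filter_true_of_mem fun i hi =>
      attacks_mk_iff.2 ⟨.inr (ne_of_mem_of_not_mem hi hjR), .inl rfl⟩
  have hcol : C.filter (fun i => attacks (i, 1) (1, j)) = C.filter (· = j) :=
    filter_congr fun i hi => by have := hC i hi; rw [attacks_mk_iff]; omega
  have hdisj := disjoint_image_row_image_col (R := R) (.inr fun h => by simpa using hC 1 h)
  rw [rowColSet, filter_union,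
    card_union_of_disjoint (hdisj.mono (filter_subset _ _) (filter_subset _ _)),
    filter_image, filter_image, card_image_of_injective _ (Prod.mk_right_injective 1),
    card_image_of_injective _ (Prod.mk_left_injective 1), hrow, hcol, filter_eq']
  split_ifs <;> simp

lemma card_filter_attacks_col {R C : Finset ℕ} {i : ℕ} (hR : ∀ j ∈ R, 2 ≤ j) (hi : 2 ≤ i)
    (hiC : i ∉ C) :
    #((rowColSet R C).filter (attacks · (i, 1))) = #C + if i ∈ R then 1 else 0 := by
  have hrow : R.filter (fun j => attacks (1, j) (i, 1)) = R.filter (· = i) :=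
    filter_congr fun j hj => by have := hR j hj; rw [attacks_mk_iff]; omega
  have hcol : C.filter (fun k => attacks (k, 1) (i, 1)) = C :=
    filter_true_of_mem fun k hk =>
      attacks_mk_iff.2 ⟨.inl (ne_of_mem_of_not_mem hk hiC), .inr (.inl rfl)⟩
  have hdisj := disjoint_image_row_image_col (C := C) (.inl fun h => by simpa using hR 1 h)
  rw [rowColSet, filter_union,
    card_union_of_disjoint (hdisj.mono (filter_subset _ _) (filter_subset _ _)),
    filter_image, filter_image, card_image_of_injective _ (Prod.mk_right_injective 1),
    card_image_of_injective _ (Prod.mk_left_injective 1), hrow, hcol, filter_eq']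
  split_ifs <;> simp [add_comm]

lemma IsReachable.insert_row {n j : ℕ} {R C : Finset ℕ} (h : IsReachable n (rowColSet R C))
    (hC : ∀ i ∈ C, 2 ≤ i) (hj : 2 ≤ j) (hjn : j ≤ n) (hjR : j ∉ R)
    (heven : Even (#R + if j ∈ C then 1 else 0)) :
    IsReachable n (rowColSet (insert j R) C) := by
  have hnot : (1, j) ∉ rowColSet R C := by
    simp only [rowColSet, mem_union, mem_image, Prod.mk.injEq, not_or, not_exists, not_and]
    exact ⟨fun r hr _ hrj => hjR (hrj ▸ hr), fun i _ _ => by omega⟩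
  rw [rowColSet, image_insert, insert_union]
  exact h.insert_of_even (by simp [board]; omega) hnot
    (by rwa [card_filter_attacks_row hC hj hjR])

lemma IsReachable.insert_col {n i : ℕ} {R C : Finset ℕ} (h : IsReachable n (rowColSet R C))
    (hR : ∀ j ∈ R, 2 ≤ j) (hi : 2 ≤ i) (hin : i ≤ n) (hiC : i ∉ C)
    (heven : Even (#C + if i ∈ R then 1 else 0)) :
    IsReachable n (rowColSet R (insert i C)) := by
  have hnot : (i, 1) ∉ rowColSet R C := by
    simp only [rowColSet, mem_union, mem_image, Prod.mk.injEq, not_or, not_exists, not_and]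
    exact ⟨fun j _ _ => by omega, fun k hk hki _ => hiC (hki ▸ hk)⟩
  rw [rowColSet, image_insert, union_insert]
  exact h.insert_of_even (by simp [board]; omega) hnot
    (by rwa [card_filter_attacks_col hR hi hiC])

lemma IsReachable.rowColSet_Icc_add_two {n m : ℕ} (hm : Odd m) (hmn : m + 2 ≤ n)
    (h : IsReachable n (rowColSet (Icc 2 m) (Icc 2 m))) :
    IsReachable n (rowColSet (Icc 2 (m + 2)) (Icc 2 (m + 2))) := by
  obtain ⟨t, rfl⟩ := hm
  have h₁ := h.insert_row (j := 2 * t + 2) (by simp; omega) (by omega) (by omega) (by simp)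
    (by simp [parity_simps])
  have h₂ := h₁.insert_col (i := 2 * t + 3) (by simp; omega) (by omega) (by omega) (by simp)
    (by simp [parity_simps])
  have h₃ := h₂.insert_col (i := 2 * t + 2) (by simp; omega) (by omega) (by omega) (by simp)
    (by simp [parity_simps])
  have h₄ := h₃.insert_row (j := 2 * t + 3) (by simp; omega) (by omega) (by omega) (by simp)
    (by simp [parity_simps])
  convert h₄ using 2 <;> ext <;> simp <;> omega

lemma isReachable_rowColSet_Icc {n m : ℕ} (hm : Odd m) (hmn : m ≤ n) :
    IsReachable n (rowColSet (Icc 2 m) (Icc 2 m)) := by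
  obtain ⟨t, rfl⟩ := hm
  induction t with
  | zero => simpa [rowColSet] using isReachable_empty n
  | succ t ih => exact (ih (by omega)).rowColSet_Icc_add_two (odd_two_mul_add_one t) (by omega)

lemma firstRowCol_eq_insert_rowColSet {n : ℕ} (hn : 1 ≤ n) :
    firstRowCol n = insert (1, 1) (rowColSet (Icc 2 n) (Icc 2 n)) := by
  ext ⟨u, v⟩
  simp [mem_firstRowCol, rowColSet]
  omega

lemma isReachable_firstRowCol {n : ℕ} (hn : Odd n) : IsReachable n (firstRowCol n) := by
  have hn₁ : 1 ≤ n := hn.pos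
  have hcorner : ∀ s ∈ rowColSet (Icc 2 n) (Icc 2 n), attacks s (1, 1) := by
    simp only [rowColSet, mem_union, mem_image, mem_Icc]
    rintro _ (⟨j, hj, rfl⟩ | ⟨i, hi, rfl⟩) <;> rw [attacks_mk_iff] <;> omega
  rw [firstRowCol_eq_insert_rowColSet hn₁]
  refine (isReachable_rowColSet_Icc hn le_rfl).insert_of_even (by simp [board]; omega)
    (by simp [rowColSet]) ?_
  rw [filter_true_of_mem hcorner, card_rowColSet (.inl (by simp))]
  exact ⟨_, rfl⟩

theorem odd_rowcol_locked_general (n : ℕ) (hodd : Odd n) :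
    ∃ (k : ℕ) (q : Fin k → ℕ × ℕ), IsLegalSeq n q ∧
      Finset.univ.image q = firstRowCol n ∧ Locked n (firstRowCol n) := by
  obtain ⟨k, q, hq, himage⟩ := isReachable_firstRowCol hodd
  exact ⟨k, q, hq, himage, locked_firstRowCol n⟩

/-- For odd positive `n`, the first row and column form a legal, locked game position. -/
theorem odd_rowcol_locked (n : ℕ) (hpos : 0 < n) (hodd : Odd n) :
    ∃ (k : ℕ) (q : Fin k → ℕ × ℕ), IsLegalSeq n q ∧
      Finset.univ.image q = firstRowCol n ∧ Locked n (firstRowCol n) :=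
  odd_rowcol_locked_general n hodd
end

section
/- For every even integer n > 2, there exists a legal game sequence on the n×n chessboard whose set of placed squares is exactly S = {(1,i) : 2 ≤ i ≤ n−1} ∪ {(i,1) : 2 ≤ i ≤ n−1} ∪ {(n,n)}, and this set S is locked. -/
/-- The squares `{(1,i) : 2 ≤ i ≤ n-1} ∪ {(i,1) : 2 ≤ i ≤ n-1} ∪ {(n,n)}`. -/
def evenLockedSet (n : ℕ) : Finset (ℕ × ℕ) :=
  (((Finset.Icc 2 (n - 1)).image fun i => (1, i)) ∪
    ((Finset.Icc 2 (n - 1)).image fun i => (i, 1))) ∪ {(n, n)}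

/-!
Apart from `(n, n)`, which attacks no other square of `S`, the squares of `S` attack each other
exactly when they lie on the same line (top row or left column) or are mirror images
`(1, i)`, `(i, 1)`. Place `(n, n)` first and then the blocks `(1, 2k+2), (2k+3, 1), (1, 2k+3),
(2k+2, 1)`: the first two queens of a block see only the `2k` earlier queens on their line, the
last two see those and two more. For lockedness, a square off `S` is seen by `n - 2` or by at most
three queens of each line, and a parity count, using that `n` is even at `(1, n)` and `(n, 1)`,
shows the total is odd.
-/

open Finset

lemma attacks_swap {p q : ℕ × ℕ} : attacks p.swap q.swap ↔ attacks p q := by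
  obtain ⟨a, b⟩ := p
  obtain ⟨c, d⟩ := q
  simp only [attacks, Prod.swap_prod_mk, ne_eq, Prod.mk.injEq]
  omega

lemma card_filter_lt_fin {k : ℕ} (i : Fin k) (P : ℕ → Prop) [DecidablePred P] :
    #{j : Fin k | j < i ∧ P j} = #{j ∈ range i | P j} := by
  rw [← Nat.Iio_eq_range, ← Fin.map_valEmbedding_Iio, filter_map, card_map]
  congr 1
  ext j
  simp

lemma isLegalSeq_of_injOn {n k : ℕ} {f : ℕ → ℕ × ℕ} (hinj : Set.InjOn f (Set.Iio k))
    (hboard : ∀ j < k, f j ∈ board n)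
    (heven : ∀ t < k, Even #{j ∈ range t | attacks (f j) (f t)}) :
    IsLegalSeq n fun i : Fin k => f i := by
  refine ⟨fun i j h => Fin.ext (hinj i.isLt j.isLt h), fun i => hboard i i.isLt, fun i => ?_⟩
  rw [card_filter_lt_fin i fun j => attacks (f j) (f i)]
  exact heven i i.isLt

lemma mem_evenLockedSet {n x y : ℕ} :
    (x, y) ∈ evenLockedSet n ↔
      (x = 1 ∧ 2 ≤ y ∧ y ≤ n - 1) ∨ (y = 1 ∧ 2 ≤ x ∧ x ≤ n - 1) ∨ (x = n ∧ y = n) := by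
  simp only [evenLockedSet, mem_union, mem_image, mem_Icc, mem_singleton, Prod.mk.injEq]
  grind

lemma evenLockedSet_subset_board {n : ℕ} (hn : 1 ≤ n) : evenLockedSet n ⊆ board n := by
  rintro ⟨x, y⟩ hp
  rw [mem_evenLockedSet] at hp
  simp only [board, mem_product, mem_Icc]
  omega

lemma card_filter_evenLockedSet {n : ℕ} (P : ℕ × ℕ → Prop) [DecidablePred P] :
    #{s ∈ evenLockedSet n | P s} =
      #{i ∈ Icc 2 (n - 1) | P (1, i)} + #{i ∈ Icc 2 (n - 1) | P (i, 1)} +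
        if P (n, n) then 1 else 0 := by
  have hdisj_row_col : Disjoint ((Icc 2 (n - 1)).image fun i => (1, i))
      ((Icc 2 (n - 1)).image fun i => (i, 1)) := by
    simp only [disjoint_left, mem_image, mem_Icc, not_exists, not_and]
    rintro _ ⟨i, hi, rfl⟩ j hj h
    simp only [Prod.mk.injEq] at h
    omega
  have hdisj_corner : Disjoint (((Icc 2 (n - 1)).image fun i => (1, i)) ∪
      ((Icc 2 (n - 1)).image fun i => (i, 1))) {(n, n)} := by
    simp only [disjoint_singleton_right, mem_union, mem_image, mem_Icc, Prod.mk.injEq]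
    omega
  rw [evenLockedSet, filter_union, card_union_of_disjoint (disjoint_filter_filter hdisj_corner),
    filter_union, card_union_of_disjoint (disjoint_filter_filter hdisj_row_col),
    filter_image, filter_image, card_image_of_injective _ (Prod.mk_right_injective 1),
    card_image_of_injective _ (Prod.mk_left_injective 1), filter_singleton, apply_ite card,
    card_singleton, card_empty]

lemma card_evenLockedSet {n : ℕ} (hn : 2 ≤ n) : #(evenLockedSet n) = 2 * n - 3 := by
  have := card_filter_evenLockedSet (n := n) fun _ => True
  simp only [filter_true, Nat.card_Icc, if_true] at this
  omega

/-- `(n, n)`, followed by the blocks `(1, 2k+2), (2k+3, 1), (1, 2k+3), (2k+2, 1)` for `k = 0, 1, …`. -/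
def evenLockedSeq (n j : ℕ) : ℕ × ℕ :=
  if j = 0 then (n, n)
  else if j % 2 = 1 then (1, (j + 3) / 2)
  else if j % 4 = 2 then (j / 2 + 2, 1)
  else (j / 2, 1)

lemma evenLockedSeq_injective {n : ℕ} (hn : 2 ≤ n) : Function.Injective (evenLockedSeq n) := by
  intro a b h
  unfold evenLockedSeq at h
  split_ifs at h <;> simp only [Prod.mk.injEq] at h <;> omega

lemma evenLockedSeq_mem {n j : ℕ} (heven : Even n) (hj : j < 2 * n - 3) :
    evenLockedSeq n j ∈ evenLockedSet n := by
  obtain ⟨m, rfl⟩ := heven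
  unfold evenLockedSeq
  split_ifs <;> rw [mem_evenLockedSet] <;> omega

lemma attacks_evenLockedSeq_iff {n j t : ℕ} (heven : Even n) (hjt : j < t) (ht : t < 2 * n - 3) :
    attacks (evenLockedSeq n j) (evenLockedSeq n t) ↔
      (1 ≤ j ∧ j % 2 = t % 2) ∨ (t % 4 = 3 ∧ j + 1 = t) ∨ (t % 4 = 0 ∧ j + 3 = t) := by
  obtain ⟨m, rfl⟩ := heven
  unfold evenLockedSeq
  split_ifs <;> simp only [attacks, ne_eq, Prod.mk.injEq, true_and, and_true, true_or, or_true] <;>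
    omega

lemma card_filter_range_pos_parity (t : ℕ) :
    #{j ∈ range t | 1 ≤ j ∧ j % 2 = t % 2} = (t - 1) / 2 := by
  have : {j ∈ range t | 1 ≤ j ∧ j % 2 = t % 2} =
      (range ((t - 1) / 2)).image fun i => 2 * i + 2 - t % 2 := by
    ext j
    simp only [mem_filter, mem_range, mem_image]
    constructor
    · rintro ⟨hjt, hj1, hjpar⟩
      exact ⟨j / 2 + j % 2 - 1, by omega, by omega⟩
    · rintro ⟨i, hi, rfl⟩
      omega
  rw [this, card_image_of_injective _ (fun a b h => by omega), card_range]

lemma card_earlier_attackers_evenLockedSeq {n t : ℕ} (heven : Even n) (ht : t < 2 * n - 3) :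
    #{j ∈ range t | attacks (evenLockedSeq n j) (evenLockedSeq n t)} = 2 * ((t + 1) / 4) := by
  rw [filter_congr fun j hj => attacks_evenLockedSeq_iff heven (mem_range.1 hj) ht, filter_or,
    card_union_of_disjoint (disjoint_filter.2 fun j _ h => by omega),
    card_filter_range_pos_parity]
  by_cases hextra : t % 4 = 3 ∨ t % 4 = 0 ∧ 0 < t
  · have : {j ∈ range t | t % 4 = 3 ∧ j + 1 = t ∨ t % 4 = 0 ∧ j + 3 = t} =
        {if t % 4 = 3 then t - 1 else t - 3} := by
      ext j
      simp only [mem_filter, mem_range, mem_singleton]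
      split_ifs <;> omega
    rw [this, card_singleton]
    omega
  · rw [card_eq_zero.2 (filter_eq_empty_iff.2 fun j hj => by rw [mem_range] at hj; omega)]
    omega

lemma card_attackers_in_row {n x y : ℕ} (hx : 2 ≤ x) (hy : 1 ≤ y) (hyn : y ≤ n) :
    #{i ∈ Icc 2 (n - 1) | attacks (1, i) (x, y)} =
      (if 2 ≤ y ∧ y < n then 1 else 0) + (if x + y ≤ n then 1 else 0) +
        if x < y then 1 else 0 := by
  calc #{i ∈ Icc 2 (n - 1) | attacks (1, i) (x, y)}
      = ∑ i ∈ Icc 2 (n - 1), ((if i = y then 1 else 0) + (if i = x + y - 1 then 1 else 0) +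
          if i = y + 1 - x then 1 else 0) := by
        rw [card_filter]
        refine sum_congr rfl fun i hi => ?_
        have : attacks (1, i) (x, y) ↔ i = y ∨ i = x + y - 1 ∨ i = y + 1 - x := by
          rw [mem_Icc] at hi
          simp only [attacks, ne_eq, Prod.mk.injEq]
          omega
        simp only [this]
        split_ifs <;> omega
    _ = _ := by
        simp only [sum_add_distrib, sum_ite_eq', mem_Icc]
        split_ifs <;> omega

lemma card_attackers_in_own_row {n y : ℕ} (hy : y < 2 ∨ n - 1 < y) :
    #{i ∈ Icc 2 (n - 1) | attacks (1, i) (1, y)} = n - 2 := by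
  rw [filter_true_of_mem fun i hi => ?_, Nat.card_Icc]
  · omega
  rw [mem_Icc] at hi
  simp only [attacks, ne_eq, Prod.mk.injEq, true_and, true_or, and_true]
  omega

theorem locked_evenLockedSet {n : ℕ} (heven : Even n) :
    Locked n (evenLockedSet n) := by
  rintro ⟨x, y⟩ hp hpS
  simp only [board, mem_product, mem_Icc] at hp
  rw [mem_evenLockedSet] at hpS
  have hcol : #{i ∈ Icc 2 (n - 1) | attacks (i, 1) (x, y)} =
      #{i ∈ Icc 2 (n - 1) | attacks (1, i) (y, x)} :=
    congrArg card (filter_congr fun _ _ => attacks_swap.symm)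
  have hcorner : attacks (n, n) (x, y) ↔ x = n ∨ y = n ∨ x = y := by
    simp only [attacks, ne_eq, Prod.mk.injEq]
    omega
  rw [card_filter_evenLockedSet, hcol, if_congr hcorner rfl rfl]
  obtain ⟨m, rfl⟩ := heven
  rw [Nat.odd_iff]
  rcases (show x = 1 ∧ y = 1 ∨ x = 1 ∧ y = m + m ∨ x = m + m ∧ y = 1 ∨ 2 ≤ x ∧ 2 ≤ y by omega)
    with ⟨rfl, rfl⟩ | ⟨rfl, rfl⟩ | ⟨rfl, rfl⟩ | ⟨hx, hy⟩
  · rw [card_attackers_in_own_row (by omega)]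
    split_ifs <;> omega
  · rw [card_attackers_in_own_row (by omega), card_attackers_in_row (by omega) le_rfl (by omega)]
    split_ifs <;> omega
  · rw [card_attackers_in_row (by omega) le_rfl (by omega), card_attackers_in_own_row (by omega)]
    split_ifs <;> omega
  · rw [card_attackers_in_row hx (by omega) hp.2.2, card_attackers_in_row hy (by omega) hp.1.2]
    split_ifs <;> omega

/-- For even `n > 2`, the set `evenLockedSet n` is a legal, locked game position. -/
theorem even_locked_position (n : ℕ) (hn : 2 < n) (heven : Even n) :
    ∃ (k : ℕ) (q : Fin k → ℕ × ℕ), IsLegalSeq n q ∧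
      Finset.univ.image q = evenLockedSet n ∧ Locked n (evenLockedSet n) := by
  have hinj := evenLockedSeq_injective (n := n) (by omega)
  have hmem : ∀ j < 2 * n - 3, evenLockedSeq n j ∈ evenLockedSet n :=
    fun _ hj => evenLockedSeq_mem heven hj
  refine ⟨2 * n - 3, fun i => evenLockedSeq n i, ?_, ?_, locked_evenLockedSet heven⟩
  · refine isLegalSeq_of_injOn hinj.injOn
      (fun j hj => evenLockedSet_subset_board (by omega) (hmem j hj)) fun t ht => ?_
    rw [card_earlier_attackers_evenLockedSeq heven ht]
    exact even_two_mul _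
  · refine eq_of_subset_of_card_le (image_subset_iff.2 fun i _ => hmem i i.isLt) ?_
    rw [card_evenLockedSet (by omega), card_image_of_injective _ fun a b h => Fin.ext (hinj h),
      card_univ, Fintype.card_fin]
end

section
/- For every odd positive integer n and every square q of the n×n chessboard, the number of squares p ≠ q that attack q is even. (Equivalently, on a fully covered odd-length chessboard every square is attacked by an even number of queens.) -/
/-!
The squares attacking `q = (a, b)` are the other squares of its row, column, diagonal and
antidiagonal, and these four punctured lines are pairwise disjoint. Row and column have `n`
squares each; the diagonal has `n - |a - b|` and the antidiagonal `n - |a + b - (n + 1)|`.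
The two absolute values together have the parity of `2a - (n + 1)`, which is even for odd `n`.
-/

open Finset

variable {n : ℕ} {q : ℕ × ℕ}

lemma card_board_filter_fst_eq (hq : q ∈ board n) : #{p ∈ board n | p.1 = q.1} = n := by
  have : {p ∈ board n | p.1 = q.1} = {q.1} ×ˢ Icc 1 n := by
    ext p; simp only [board, mem_filter, mem_product, mem_singleton] at hq ⊢; grind
  simp [this]

lemma card_board_filter_snd_eq (hq : q ∈ board n) : #{p ∈ board n | p.2 = q.2} = n := by
  have : {p ∈ board n | p.2 = q.2} = Icc 1 n ×ˢ {q.2} := by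
    ext p; simp only [board, mem_filter, mem_product, mem_singleton] at hq ⊢; grind
  simp [this]

lemma card_board_filter_diagonal (hq : q ∈ board n) :
    (#{p ∈ board n | p.1 + q.2 = q.1 + p.2} : ℤ) = n - |(q.1 : ℤ) - q.2| := by
  obtain ⟨a, b⟩ := q
  simp only [board, mem_product, mem_Icc] at hq
  have : {p ∈ board n | p.1 + b = a + p.2} =
      (Icc (max 1 (a + 1 - b)) (min n (a + n - b))).image fun i => (i, i + b - a) := by
    ext ⟨x, y⟩
    simp only [board, mem_filter, mem_product, mem_Icc, mem_image, Prod.mk.injEq]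
    constructor
    · rintro ⟨h, h'⟩; exact ⟨x, by omega, rfl, by omega⟩
    · rintro ⟨i, h, rfl, rfl⟩; omega
  rw [this, card_image_of_injective _ fun u v h => (Prod.ext_iff.mp h).1, Nat.card_Icc]
  dsimp only
  rcases abs_cases ((a : ℤ) - b) with h | h <;> omega

lemma card_board_filter_antidiagonal (hq : q ∈ board n) :
    (#{p ∈ board n | p.1 + p.2 = q.1 + q.2} : ℤ) = n - |(q.1 : ℤ) + q.2 - (n + 1)| := by
  obtain ⟨a, b⟩ := q
  simp only [board, mem_product, mem_Icc] at hq
  have : {p ∈ board n | p.1 + p.2 = a + b} =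
      (Icc (max 1 (a + b - n)) (min n (a + b - 1))).image fun i => (i, a + b - i) := by
    ext ⟨x, y⟩
    simp only [board, mem_filter, mem_product, mem_Icc, mem_image, Prod.mk.injEq]
    constructor
    · rintro ⟨h, h'⟩; exact ⟨x, by omega, rfl, by omega⟩
    · rintro ⟨i, h, rfl, rfl⟩; omega
  rw [this, card_image_of_injective _ fun u v h => (Prod.ext_iff.mp h).1, Nat.card_Icc]
  dsimp only
  rcases abs_cases ((a : ℤ) + b - (n + 1)) with h | h <;> omega

lemma card_filter_attacks_add_four {s : Finset (ℕ × ℕ)} (hq : q ∈ s) :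
    #{p ∈ s | attacks p q} + 4 = #{p ∈ s | p.1 = q.1} + #{p ∈ s | p.2 = q.2} +
      #{p ∈ s | p.1 + q.2 = q.1 + p.2} + #{p ∈ s | p.1 + p.2 = q.1 + q.2} := by
  have hunion : {p ∈ s | attacks p q} =
      {p ∈ s | p.1 = q.1}.erase q ∪ {p ∈ s | p.2 = q.2}.erase q ∪
      {p ∈ s | p.1 + q.2 = q.1 + p.2}.erase q ∪ {p ∈ s | p.1 + p.2 = q.1 + q.2}.erase q := by
    ext p
    simp only [mem_filter, mem_union, mem_erase]
    unfold attacks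
    tauto
  rw [hunion, card_union_of_disjoint, card_union_of_disjoint, card_union_of_disjoint]
  · have h₁ := card_erase_add_one (s := {p ∈ s | p.1 = q.1}) (a := q)
      (mem_filter.2 ⟨hq, rfl⟩)
    have h₂ := card_erase_add_one (s := {p ∈ s | p.2 = q.2}) (a := q)
      (mem_filter.2 ⟨hq, rfl⟩)
    have h₃ := card_erase_add_one (s := {p ∈ s | p.1 + q.2 = q.1 + p.2}) (a := q)
      (mem_filter.2 ⟨hq, rfl⟩)
    have h₄ := card_erase_add_one (s := {p ∈ s | p.1 + p.2 = q.1 + q.2}) (a := q)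
      (mem_filter.2 ⟨hq, rfl⟩)
    omega
  all_goals
    simp only [disjoint_left, mem_union, mem_erase, mem_filter, ne_eq, Prod.ext_iff]
    omega

theorem odd_board_attack_parity_general (n : ℕ) (hodd : Odd n)
    (q : ℕ × ℕ) (hq : q ∈ board n) :
    Even (((board n).filter fun p => attacks p q).card) := by
  have hcount := card_filter_attacks_add_four hq
  rw [card_board_filter_fst_eq hq, card_board_filter_snd_eq hq] at hcount
  have hdiag := card_board_filter_diagonal hq
  have hanti := card_board_filter_antidiagonal hq
  have habs_even : Even (|(q.1 : ℤ) - q.2| + |(q.1 : ℤ) + q.2 - (n + 1)|) := by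
    rw [Int.even_add, even_abs, even_abs]
    simp [parity_simps, hodd]
  obtain ⟨k, hk⟩ := habs_even
  obtain ⟨m, rfl⟩ := hodd
  rw [Nat.even_iff]
  omega

/-- For odd positive `n`, every square of the `n × n` chessboard is attacked by an even
number of other squares. -/
theorem odd_board_attack_parity (n : ℕ) (hpos : 0 < n) (hodd : Odd n)
    (q : ℕ × ℕ) (hq : q ∈ board n) :
    Even (((board n).filter fun p => attacks p q).card) :=
  odd_board_attack_parity_general n hodd q hq
end
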